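/- For every α ∈ ℝ^n, the vector β(α) with entries β_j(α) = 𝔅(η_j(α)) attains the infimum of L(·, α) over ℝ^p; that is, L(β(α), α) = D(α) and L(β(α), α) ≤ L(β, α) for all β ∈ ℝ^p. -/

import Mathlib

noncomputable section

/-- ℓ₀ "norm": number of nonzero entries, as a real number. -/
def zeroNorm {p : ℕ} (β : EuclideanSpace ℝ (Fin p)) : ℝ :=
  ((Finset.univ.filter fun j => β j ≠ 0).card : ℝ)

/-- ℓ₁ norm. -/
def oneNorm {p : ℕ} (β : EuclideanSpace ℝ (Fin p)) : ℝ := ∑ j, |β j|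

/-- `X β`, where `x j` is the `j`-th column of `X`. -/
def Xmul {n p : ℕ} (x : Fin p → EuclideanSpace ℝ (Fin n))
    (β : EuclideanSpace ℝ (Fin p)) : EuclideanSpace ℝ (Fin n) :=
  ∑ j, β j • x j

/-- Primal objective `P(β)`. -/
def Pobj {n p : ℕ} (x : Fin p → EuclideanSpace ℝ (Fin n)) (y : EuclideanSpace ℝ (Fin n))
    (l0 l1 l2 : ℝ) (β : EuclideanSpace ℝ (Fin p)) : ℝ :=
  (1/2) * ‖y - Xmul x β‖^2 + l0 * zeroNorm β + l1 * oneNorm β + l2 * ‖β‖^2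

/-- Lagrangian `L(β, α)`. -/
def Lag {n p : ℕ} (x : Fin p → EuclideanSpace ℝ (Fin n)) (y : EuclideanSpace ℝ (Fin n))
    (l0 l1 l2 : ℝ) (β : EuclideanSpace ℝ (Fin p)) (α : EuclideanSpace ℝ (Fin n)) : ℝ :=
  (inner ℝ α (Xmul x β) : ℝ) - (1/2) * ‖α‖^2 - (inner ℝ y α : ℝ)
    + l0 * zeroNorm β + l1 * oneNorm β + l2 * ‖β‖^2

/-- `η_j(α) = −⟨x_j, α⟩ / (2 λ₂)`. -/
def etav {n p : ℕ} (x : Fin p → EuclideanSpace ℝ (Fin n)) (l2 : ℝ)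
    (α : EuclideanSpace ℝ (Fin n)) (j : Fin p) : ℝ :=
  -(inner ℝ (x j) α : ℝ) / (2 * l2)

/-- Threshold `η₀ = (2√(λ₀λ₂) + λ₁)/(2λ₂)`. -/
def eta0 (l0 l1 l2 : ℝ) : ℝ := (2 * Real.sqrt (l0 * l2) + l1) / (2 * l2)

/-- Scalar function `ψ` appearing in the dual objective. -/
def psi (l0 l1 l2 : ℝ) (t : ℝ) : ℝ :=
  if eta0 l0 l1 l2 ≤ |t| then -l2 * (|t| - l1 / (2 * l2))^2 + l0 else 0

/-- Dual objective `D(α)` for the square loss. -/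
def Dobj {n p : ℕ} (x : Fin p → EuclideanSpace ℝ (Fin n)) (y : EuclideanSpace ℝ (Fin n))
    (l0 l1 l2 : ℝ) (α : EuclideanSpace ℝ (Fin n)) : ℝ :=
  -(1/2) * ‖α‖^2 - (inner ℝ y α : ℝ) + ∑ j : Fin p, psi l0 l1 l2 (etav x l2 α j)

/-- Thresholding map `𝔅`. -/
def Bth (l0 l1 l2 : ℝ) (t : ℝ) : ℝ :=
  if eta0 l0 l1 l2 ≤ |t| then Real.sign t * (|t| - l1 / (2 * l2)) else 0

/-- Primal-dual link `β(α)` with entries `β_j(α) = 𝔅(η_j(α))`. -/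
def betaOf {n p : ℕ} (x : Fin p → EuclideanSpace ℝ (Fin n)) (l0 l1 l2 : ℝ)
    (α : EuclideanSpace ℝ (Fin n)) : EuclideanSpace ℝ (Fin p) :=
  WithLp.toLp 2 (fun j => Bth l0 l1 l2 (etav x l2 α j))

/-- `(β̄, ᾱ)` is a saddle point of the Lagrangian `L`. -/
def IsSaddle {n p : ℕ} (x : Fin p → EuclideanSpace ℝ (Fin n)) (y : EuclideanSpace ℝ (Fin n))
    (l0 l1 l2 : ℝ) (βb : EuclideanSpace ℝ (Fin p)) (αb : EuclideanSpace ℝ (Fin n)) : Prop :=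
  (∀ α, Lag x y l0 l1 l2 βb α ≤ Lag x y l0 l1 l2 βb αb) ∧
  (∀ β, Lag x y l0 l1 l2 βb αb ≤ Lag x y l0 l1 l2 β αb)


/-! After discarding the terms free of `β`, the Lagrangian `L(·, α)` separates into a sum over
coordinates of `g(t, b) = λ₂ b² - 2 λ₂ t b + λ₁ |b| + λ₀ [b ≠ 0]` (`coordLag`) with
`t = η_j(α)`. For `b ≠ 0` the term `-2 λ₂ t b` is smallest when `b` has the sign of `t`, and
completing the square gives the value `λ₀ - λ₂ (|t| - λ₁/(2λ₂))²` at `|b| = |t| - λ₁/(2λ₂)`.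
By AM-GM this beats `g(t, 0) = 0` exactly when `|t| ≥ η₀`, so `min_b g(t, b) = ψ(t)`,
attained at `b = 𝔅(t)`. -/

def coordLag (l0 l1 l2 t b : ℝ) : ℝ :=
  -(2 * l2 * t) * b + l2 * b ^ 2 + l1 * |b| + if b = 0 then 0 else l0

section Scalar

variable {l0 l1 l2 : ℝ}

theorem eta0_le_abs_iff (hl2 : 0 < l2) (t : ℝ) :
    eta0 l0 l1 l2 ≤ |t| ↔ √(l0 * l2) ≤ l2 * (|t| - l1 / (2 * l2)) := by
  have hc : l2 * (l1 / (2 * l2)) = l1 / 2 := by field_simp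
  rw [eta0, div_le_iff₀ (by positivity), mul_sub, hc]
  constructor <;> intro h <;> linarith

theorem coordLag_zero (t : ℝ) : coordLag l0 l1 l2 t 0 = 0 := by
  simp [coordLag]

theorem coordLag_sign_mul {t m : ℝ} (ht : t ≠ 0) (hm : 0 < m) :
    coordLag l0 l1 l2 t (Real.sign t * m) = -(2 * l2 * |t|) * m + l2 * m ^ 2 + l1 * m + l0 := by
  rcases ht.lt_or_gt with h | h
  · simp [coordLag, Real.sign_of_neg h, abs_of_neg h, abs_of_pos hm, hm.ne']
  · simp [coordLag, Real.sign_of_pos h, abs_of_pos h, abs_of_pos hm, hm.ne']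

theorem coordLag_ge_of_ne_zero (hl2 : 0 < l2) (t : ℝ) {b : ℝ} (hb : b ≠ 0) :
    l2 * |b| ^ 2 - 2 * l2 * (|t| - l1 / (2 * l2)) * |b| + l0 ≤ coordLag l0 l1 l2 t b := by
  have hc : 2 * l2 * (|t| - l1 / (2 * l2)) = 2 * l2 * |t| - l1 := by field_simp
  have htb : l2 * (t * b) ≤ l2 * (|t| * |b|) :=
    mul_le_mul_of_nonneg_left ((le_abs_self _).trans (abs_mul t b).le) hl2.le
  rw [coordLag, if_neg hb, ← sq_abs b, hc]
  linarith

theorem psi_le_coordLag (hl0 : 0 ≤ l0) (hl2 : 0 < l2) (t b : ℝ) :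
    psi l0 l1 l2 t ≤ coordLag l0 l1 l2 t b := by
  have hr : √(l0 * l2) ^ 2 = l0 * l2 := Real.sq_sqrt (by positivity)
  have hr0 : 0 ≤ √(l0 * l2) := Real.sqrt_nonneg _
  have hbound := fun hb : b ≠ 0 => coordLag_ge_of_ne_zero (l0 := l0) (l1 := l1) hl2 t hb
  set m := |t| - l1 / (2 * l2)
  rw [psi]
  split_ifs with h <;> rw [eta0_le_abs_iff hl2] at h <;> rcases eq_or_ne b 0 with rfl | hb
  · rw [coordLag_zero]
    nlinarith
  · nlinarith [hbound hb, sq_nonneg (|b| - m)]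
  · rw [coordLag_zero]
  · have hB : 0 < |b| := abs_pos.2 hb
    have hAMGM : 2 * √(l0 * l2) * |b| ≤ l2 * |b| ^ 2 + l0 := by
      nlinarith [sq_nonneg (l2 * |b| - √(l0 * l2))]
    nlinarith [hbound hb, not_le.1 h]

theorem coordLag_Bth (hl0 : 0 < l0) (hl1 : 0 ≤ l1) (hl2 : 0 < l2) (t : ℝ) :
    coordLag l0 l1 l2 t (Bth l0 l1 l2 t) = psi l0 l1 l2 t := by
  rw [Bth, psi]
  split_ifs with h
  · rw [eta0_le_abs_iff hl2] at h
    have hm : 0 < |t| - l1 / (2 * l2) :=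
      pos_of_mul_pos_right ((Real.sqrt_pos.2 (by positivity)).trans_le h) hl2.le
    have ht : t ≠ 0 := by
      rintro rfl
      have : 0 ≤ l1 / (2 * l2) := by positivity
      rw [abs_zero] at hm
      linarith
    rw [coordLag_sign_mul ht hm]
    field_simp
    ring
  · exact coordLag_zero t

end Scalar

section Lagrangian

variable {n p : ℕ} (x : Fin p → EuclideanSpace ℝ (Fin n)) (y : EuclideanSpace ℝ (Fin n))
  {l0 l1 l2 : ℝ}

theorem inner_Xmul_eq_sum (hl2 : l2 ≠ 0) (β : EuclideanSpace ℝ (Fin p))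
    (α : EuclideanSpace ℝ (Fin n)) :
    inner ℝ α (Xmul x β) = ∑ j, -(2 * l2 * etav x l2 α j) * β j := by
  rw [Xmul, inner_sum]
  refine Finset.sum_congr rfl fun j _ => ?_
  rw [real_inner_smul_right, real_inner_comm, etav]
  field_simp

theorem zeroNorm_eq_sum (β : EuclideanSpace ℝ (Fin p)) :
    l0 * zeroNorm β = ∑ j, if β j = 0 then 0 else l0 := by
  rw [zeroNorm, Finset.card_filter, Nat.cast_sum, Finset.mul_sum]
  refine Finset.sum_congr rfl fun j _ => ?_
  by_cases hj : β j = 0 <;> simp [hj]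

theorem Lag_eq_sum_coordLag (hl2 : l2 ≠ 0) (β : EuclideanSpace ℝ (Fin p))
    (α : EuclideanSpace ℝ (Fin n)) :
    Lag x y l0 l1 l2 β α = -(1 / 2) * ‖α‖ ^ 2 - inner ℝ y α
      + ∑ j, coordLag l0 l1 l2 (etav x l2 α j) (β j) := by
  rw [Lag, inner_Xmul_eq_sum x hl2, zeroNorm_eq_sum, EuclideanSpace.real_norm_sq_eq β, oneNorm]
  simp only [coordLag, Finset.sum_add_distrib, Finset.mul_sum]
  ring

end Lagrangian

/-- `β(α)` attains the infimum of `L(·, α)`. -/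
theorem stmt3 (n p : ℕ) (x : Fin p → EuclideanSpace ℝ (Fin n))
    (y : EuclideanSpace ℝ (Fin n)) (l0 l1 l2 : ℝ)
    (hl0 : 0 < l0) (hl1 : 0 ≤ l1) (hl2 : 0 < l2)
    (α : EuclideanSpace ℝ (Fin n)) :
    Lag x y l0 l1 l2 (betaOf x l0 l1 l2 α) α = Dobj x y l0 l1 l2 α ∧
    ∀ β : EuclideanSpace ℝ (Fin p),
      Lag x y l0 l1 l2 (betaOf x l0 l1 l2 α) α ≤ Lag x y l0 l1 l2 β α := by
  have hattained (j : Fin p) :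
      coordLag l0 l1 l2 (etav x l2 α j) (betaOf x l0 l1 l2 α j) = psi l0 l1 l2 (etav x l2 α j) :=
    coordLag_Bth hl0 hl1 hl2 _
  simp only [Lag_eq_sum_coordLag x y hl2.ne', hattained]
  refine ⟨rfl, fun β => ?_⟩
  gcongr with j
  exact psi_le_coordLag hl0.le hl2 _ _
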